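/- Let G be a graph, T a tree, f : G → T a graph homomorphism, n ≥ 1 an integer, and let η and η′ be multi-homomorphisms from G to T with η ≤ η′, both satisfying d_T(f(z), y) ≤ 2n for every z ∈ V(G) and every y in the assigned set. Then: (1) every directed edge of η is a directed edge of η′; (2) if (x,x′) is a directed edge of η′ and there exists an edge (x′,x″) ∈ E(G) that is a directed edge of η′ (i.e., x′ is not a sink of the directed graph determined by η′), then (x,x′) is a directed edge of η. -/

import Mathlib

/-!
Viewed as a `SimpleGraph`, `T` is a tree, so its paths are geodesics and "the path from `f x'` to
`y'` passes through `y`" becomes `d(f x', y) + d(y, y') = d(f x', y')`. Let `(x, x')` and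
`(x', x'')` be directed edges of `η'`, witnessed by `y ∈ η' x` and `z ∈ η' x'`. The neighbours `y`,
`z` satisfy `d(f x', y) = 2n - 1 < d(f x', z) = 2n`, and the edge `f x ~ f x'` cannot cross the
edge `y z`, so `d(f x, z) = 2n + 1`. Every vertex of `η x` is a neighbour of `z` within distance
`2n` of `f x`, and in a tree only one neighbour of `z` is nearer to `f x` than `z` is: so
`η x = {y}`. The same argument one step further gives `z ∈ η x'`.
-/

structure Graph' where
  V : Type
  E : V → V → Prop
  symm : ∀ {x y}, E x y → E y x

def IsGraphHom (G H : Graph') (f : G.V → H.V) : Prop :=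
  ∀ {x y}, G.E x y → H.E (f x) (f y)

structure Walk (G : Graph') (a b : G.V) where
  len : ℕ
  toFun : ℕ → G.V
  start_eq : toFun 0 = a
  end_eq : toFun len = b
  adj : ∀ i, i < len → G.E (toFun i) (toFun (i + 1))

structure MultiHom (G H : Graph') where
  toFun : G.V → Set H.V
  nonempty : ∀ x, (toFun x).Nonempty
  edge : ∀ {x y}, G.E x y → ∀ a ∈ toFun x, ∀ b ∈ toFun y, H.E a b

def MultiHom.le {G H : Graph'} (η η' : MultiHom G H) : Prop :=
  ∀ x, η.toFun x ⊆ η'.toFun x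

def SameComponent {G H : Graph'} (η η' : MultiHom G H) : Prop :=
  Relation.ReflTransGen (fun a b => MultiHom.le a b ∨ MultiHom.le b a) η η'

def ofHom {G H : Graph'} (f : G.V → H.V) (hf : IsGraphHom G H f) : MultiHom G H where
  toFun x := {f x}
  nonempty x := ⟨f x, rfl⟩
  edge := by
    intro x y hxy a ha b hb
    rw [Set.mem_singleton_iff] at ha hb
    subst ha; subst hb
    exact hf hxy

def prodI (G : Graph') (n : ℕ) : Graph' where
  V := G.V × Fin (n + 1)
  E := fun p q => G.E p.1 q.1 ∧ p.2.val ≤ q.2.val + 1 ∧ q.2.val ≤ p.2.val + 1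
  symm := by
    rintro p q ⟨h1, h2, h3⟩
    exact ⟨G.symm h1, h3, h2⟩

def MoveA {G : Graph'} {a b : G.V} (γ δ : Walk G a b) : Prop :=
  δ.len = γ.len + 2 ∧ ∃ k ≤ γ.len,
    (∀ i ≤ k, δ.toFun i = γ.toFun i) ∧
    (∀ i, k ≤ i → i ≤ γ.len → δ.toFun (i + 2) = γ.toFun i)

def MoveB {G : Graph'} {a b : G.V} (γ δ : Walk G a b) : Prop :=
  γ.len = δ.len ∧ ∃ j, ∀ i ≤ γ.len, i ≠ j → γ.toFun i = δ.toFun i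

def Eqv1 {G : Graph'} {a b : G.V} : Walk G a b → Walk G a b → Prop :=
  Relation.EqvGen MoveA

def Eqv2 {G : Graph'} {a b : G.V} : Walk G a b → Walk G a b → Prop :=
  Relation.EqvGen (fun γ δ => MoveA γ δ ∨ MoveB γ δ)

noncomputable def Graph'.dist (G : Graph') (a b : G.V) : ℕ :=
  sInf {n | ∃ γ : Walk G a b, γ.len = n}

def Graph'.Connected (G : Graph') : Prop := ∀ a b : G.V, Nonempty (Walk G a b)

def Graph'.Bipartite (G : Graph') : Prop :=
  ∃ c : G.V → ZMod 2, ∀ {x y}, G.E x y → c x ≠ c y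

def constWalk {G : Graph'} (a : G.V) : Walk G a a :=
  ⟨0, fun _ => a, rfl, rfl, fun i hi => absurd hi (by omega)⟩

def Walk.concat {G : Graph'} {a b c : G.V} (γ : Walk G a b) (δ : Walk G b c) :
    Walk G a c where
  len := γ.len + δ.len
  toFun i := if i ≤ γ.len then γ.toFun i else δ.toFun (i - γ.len)
  start_eq := by simp [γ.start_eq]
  end_eq := by
    by_cases h : δ.len = 0
    · have hbc : b = c := by
        have h1 := δ.end_eq
        rw [h, δ.start_eq] at h1
        exact h1
      simp [h, γ.end_eq, hbc]
    · have h1 : ¬ (γ.len + δ.len ≤ γ.len) := by omega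
      (try dsimp only)
      rw [if_neg h1]
      have h2 : γ.len + δ.len - γ.len = δ.len := by omega
      rw [h2, δ.end_eq]
  adj := by
    intro i hi
    (try dsimp only)
    rcases lt_trichotomy i γ.len with h | h | h
    · rw [if_pos (by omega : i ≤ γ.len), if_pos (by omega : i + 1 ≤ γ.len)]
      exact γ.adj i h
    · have hδ : 0 < δ.len := by omega
      rw [if_pos (by omega : i ≤ γ.len), if_neg (by omega : ¬ i + 1 ≤ γ.len)]
      have h2 : i + 1 - γ.len = 1 := by omega
      rw [h2, h, γ.end_eq]
      have h3 := δ.adj 0 hδ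
      rw [δ.start_eq] at h3
      exact h3
    · rw [if_neg (by omega : ¬ i ≤ γ.len), if_neg (by omega : ¬ i + 1 ≤ γ.len)]
      have h2 : i + 1 - γ.len = (i - γ.len) + 1 := by omega
      rw [h2]
      exact δ.adj (i - γ.len) (by omega)

def Walk.reverse {G : Graph'} {a b : G.V} (γ : Walk G a b) : Walk G b a where
  len := γ.len
  toFun i := γ.toFun (γ.len - i)
  start_eq := by simp [γ.end_eq]
  end_eq := by simp [γ.start_eq]
  adj := by
    intro i hi
    have h1 : γ.len - i = (γ.len - (i + 1)) + 1 := by omega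
    have h2 := γ.adj (γ.len - (i + 1)) (by omega)
    rw [← h1] at h2
    exact G.symm h2

def Walk.map {G H : Graph'} (f : G.V → H.V) (hf : IsGraphHom G H f) {a b : G.V}
    (γ : Walk G a b) : Walk H (f a) (f b) where
  len := γ.len
  toFun i := f (γ.toFun i)
  start_eq := by (try dsimp only); rw [γ.start_eq]
  end_eq := by (try dsimp only); rw [γ.end_eq]
  adj := fun i hi => hf (γ.adj i hi)

def Walk.pow {G : Graph'} {a : G.V} (γ : Walk G a a) : ℕ → Walk G a a
  | 0 => constWalk a
  | n + 1 => (Walk.pow γ n).concat γ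

def Walk.zpow {G : Graph'} {a : G.V} (γ : Walk G a a) : ℤ → Walk G a a
  | Int.ofNat n => γ.pow n
  | Int.negSucc n => γ.reverse.pow (n + 1)
def finClip (n t : ℕ) : Fin (n + 1) := ⟨min t n, by omega⟩

def realizedWalk {G H : Graph'} {n : ℕ} (h : (prodI G n).V → H.V)
    (hh : IsGraphHom (prodI G n) H h) {v v' : G.V} (hvv' : G.E v v')
    {w : H.V} (h0 : h (v, finClip n 0) = w) (hN : h (v, finClip n n) = w) :
    Walk H w w where
  len := 2 * n
  toFun i := if i % 2 = 0 then h (v, finClip n (i / 2)) else h (v', finClip n (i / 2))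
  start_eq := by
    (try dsimp only)
    rw [if_pos (by norm_num : (0:ℕ) % 2 = 0), Nat.zero_div]
    exact h0
  end_eq := by
    (try dsimp only)
    rw [if_pos (by omega : (2 * n) % 2 = 0)]
    have h2 : 2 * n / 2 = n := by omega
    rw [h2]
    exact hN
  adj := by
    intro i hi
    (try dsimp only)
    rcases Nat.even_or_odd i with he | ho
    · obtain ⟨t, ht⟩ := he
      rw [if_pos (by omega : i % 2 = 0), if_neg (by omega : ¬ (i + 1) % 2 = 0)]
      have h4 : (i + 1) / 2 = i / 2 := by omega
      rw [h4]
      refine hh ⟨hvv', ?_, ?_⟩ <;> (dsimp only; omega)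
    · obtain ⟨t, ht⟩ := ho
      rw [if_neg (by omega : ¬ i % 2 = 0), if_pos (by omega : (i + 1) % 2 = 0)]
      refine hh ⟨G.symm hvv', ?_, ?_⟩ <;> (dsimp only [finClip]; omega)

def Realizable {G H : Graph'} (f : G.V → H.V) (v : G.V) (ω : Walk H (f v) (f v)) : Prop :=
  ∃ (n : ℕ) (h : (prodI G n).V → H.V) (hh : IsGraphHom (prodI G n) H h)
    (hs : ∀ x, h (x, finClip n 0) = f x) (he : ∀ x, h (x, finClip n n) = f x)
    (v' : G.V) (_ : G.E v v'),
    Eqv2 ω (realizedWalk h hh ‹G.E v v'› (hs v) (he v))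
def SquareFree (G : Graph') : Prop :=
  (∀ x, ¬ G.E x x) ∧
  ¬ ∃ a b c d : G.V, a ≠ b ∧ a ≠ c ∧ a ≠ d ∧ b ≠ c ∧ b ≠ d ∧ c ≠ d ∧
    G.E a b ∧ G.E b c ∧ G.E c d ∧ G.E d a

def nbhd (G : Graph') (v : G.V) : Set G.V := {y | G.E v y}

def nbhd2 (G : Graph') (v : G.V) : Set G.V := {z | ∃ y, G.E v y ∧ G.E y z}

def IsGraphCovering (G H : Graph') (p : G.V → H.V) : Prop :=
  IsGraphHom G H p ∧ ∀ v : G.V, Set.BijOn p (nbhd G v) (nbhd H (p v))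

def Is2CoveringMap (G H : Graph') (p : G.V → H.V) : Prop :=
  IsGraphHom G H p ∧ ∀ v : G.V,
    Set.BijOn p (nbhd G v) (nbhd H (p v)) ∧ Set.BijOn p (nbhd2 G v) (nbhd2 H (p v))

def pushforward {G H1 H2 : Graph'} (p : H1.V → H2.V) (hp : IsGraphHom H1 H2 p)
    (η : MultiHom G H1) : MultiHom G H2 where
  toFun x := p '' η.toFun x
  nonempty x := (η.nonempty x).image p
  edge := by
    rintro x y hxy a ⟨a', ha', rfl⟩ b ⟨b', hb', rfl⟩
    exact hp (η.edge hxy a' ha' b' hb')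

def IsCycleWalk {G : Graph'} {a : G.V} (γ : Walk G a a) : Prop :=
  3 ≤ γ.len ∧ ∀ i j, i < γ.len → j < γ.len → γ.toFun i = γ.toFun j → i = j

def IsTree (T : Graph') : Prop :=
  (∀ x, ¬ T.E x x) ∧ (∀ a b : T.V, Nonempty (Walk T a b)) ∧
    ∀ (a : T.V) (γ : Walk T a a), ¬ IsCycleWalk γ

def IsPath {G : Graph'} {a b : G.V} (γ : Walk G a b) : Prop :=
  ∀ i j, i ≤ γ.len → j ≤ γ.len → γ.toFun i = γ.toFun j → i = j

def OnWalk {G : Graph'} {a b : G.V} (γ : Walk G a b) (y : G.V) : Prop :=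
  ∃ i ≤ γ.len, γ.toFun i = y

def CrossHomotopic (G H : Graph') (f g : G.V → H.V) : Prop :=
  ∃ (n : ℕ) (h : (prodI G n).V → H.V), IsGraphHom (prodI G n) H h ∧
    (∀ x, h (x, finClip n 0) = f x) ∧ (∀ x, h (x, finClip n n) = g x)

def quotGraph (G : Graph') (Γ : Type) [Group Γ] [MulAction Γ G.V] : Graph' where
  V := Quotient (MulAction.orbitRel Γ G.V)
  E := fun α β => ∃ x y : G.V, Quotient.mk (MulAction.orbitRel Γ G.V) x = α ∧
        Quotient.mk (MulAction.orbitRel Γ G.V) y = β ∧ G.E x y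
  symm := by
    rintro α β ⟨x, y, hx, hy, hxy⟩
    exact ⟨y, x, hy, hx, G.symm hxy⟩
def DirEdge {G T : Graph'} (f : G.V → T.V) (n : ℕ) (η : MultiHom G T)
    (x x' : G.V) : Prop :=
  G.E x x' ∧ ∃ y ∈ η.toFun x, ∃ y' ∈ η.toFun x',
    T.dist (f x) y = 2 * n ∧ T.dist (f x') y' = 2 * n ∧
    ∀ Q : Walk T (f x') y', IsPath Q → OnWalk Q y

namespace SimpleGraph.IsTree

variable {V : Type*} {G : SimpleGraph V} (hG : G.IsTree)
include hG

lemma length_eq_dist_of_isPath {u v : V} {p : G.Walk u v} (hp : p.IsPath) :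
    p.length = G.dist u v := by
  obtain ⟨q, hq, hlen⟩ := hG.connected.exists_path_of_dist u v
  rw [← hlen, Subtype.mk.inj <| hG.isAcyclic.subsingleton_path u v |>.elim ⟨p, hp⟩ ⟨q, hq⟩]

lemma mem_support_iff_dist_add_dist_eq {u v y : V} {p : G.Walk u v} (hp : p.IsPath) :
    y ∈ p.support ↔ G.dist u y + G.dist y v = G.dist u v := by
  classical
  constructor
  · intro hy
    rw [← hG.length_eq_dist_of_isPath (hp.takeUntil hy),
      ← hG.length_eq_dist_of_isPath (hp.dropUntil hy), ← hG.length_eq_dist_of_isPath hp,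
      ← Walk.length_append, Walk.take_spec]
  · intro hdist
    obtain ⟨q, -, hq⟩ := hG.connected.exists_path_of_dist u y
    obtain ⟨r, -, hr⟩ := hG.connected.exists_path_of_dist y v
    have hqr : (q.append r).IsPath :=
      Walk.isPath_of_length_eq_dist _ (by rw [Walk.length_append, hq, hr, hdist])
    rw [Subtype.mk.inj <| hG.isAcyclic.subsingleton_path u v |>.elim ⟨p, hp⟩ ⟨_, hqr⟩]
    exact (Walk.mem_support_append_iff _ _).mpr (Or.inl q.end_mem_support)

lemma dist_add_dist_eq_of_dist_le {u v a b : V}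
    (ha : G.dist u a + G.dist a v = G.dist u v) (hb : G.dist u b + G.dist b v = G.dist u v)
    (hab : G.dist u a ≤ G.dist u b) : G.dist u a + G.dist a b = G.dist u b := by
  classical
  obtain ⟨p, hp, -⟩ := hG.connected.exists_path_of_dist u v
  have hbp : b ∈ p.support := (hG.mem_support_iff_dist_add_dist_eq hp).mpr hb
  have hap : a ∈ ((p.takeUntil b hbp).append (p.dropUntil b hbp)).support := by
    rw [Walk.take_spec]; exact (hG.mem_support_iff_dist_add_dist_eq hp).mpr ha
  rcases (Walk.mem_support_append_iff _ _).mp hap with hat | had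
  · exact (hG.mem_support_iff_dist_add_dist_eq (hp.takeUntil hbp)).mp hat
  · have := (hG.mem_support_iff_dist_add_dist_eq (hp.dropUntil hbp)).mp had
    have hcomm : G.dist a b = G.dist b a := dist_comm
    omega

lemma eq_of_adj_of_dist_lt {u a a' b : V} (hab : G.Adj a b) (ha'b : G.Adj a' b)
    (ha : G.dist u a < G.dist u b) (ha' : G.dist u a' < G.dist u b) : a = a' := by
  have h1 := hG.dist_eq_dist_add_one_of_adj u hab
  have h2 := hG.dist_eq_dist_add_one_of_adj u ha'b
  have hd : G.dist a b = 1 := dist_eq_one_iff_adj.mpr hab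
  have hd' : G.dist a' b = 1 := dist_eq_one_iff_adj.mpr ha'b
  have := hG.dist_add_dist_eq_of_dist_le (v := b) (by omega) (by omega) (le_of_eq (by omega) :
    G.dist u a ≤ G.dist u a')
  exact (hG.connected.dist_eq_zero_iff).mp (by omega)

lemma dist_eq_dist_add_one_of_adj_of_dist_lt {w w' y z : V} (hww' : G.Adj w w')
    (hyz : G.Adj y z) (h : G.dist w' y < G.dist w' z) (hne : w' ≠ y) :
    G.dist w z = G.dist w y + 1 := by
  refine (hG.dist_eq_dist_add_one_of_adj w hyz).resolve_left fun hzy => ?_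
  have hw' := hG.dist_eq_dist_add_one_of_adj w' hyz
  have hy := hG.dist_eq_dist_add_one_of_adj y hww'
  have hz := hG.dist_eq_dist_add_one_of_adj z hww'
  have hyw' := hG.connected.pos_dist_of_ne hne.symm
  have hyz1 := dist_eq_one_iff_adj.mpr hyz
  have hww'1 := dist_eq_one_iff_adj.mpr hww'.symm
  -- Otherwise `z` and `w'` both lie on the geodesic from `y` to `w`, with `z` nearer to `y`,
  -- which contradicts `d(w', z) = d(w', y) + 1`.
  have hzw' := hG.dist_add_dist_eq_of_dist_le (u := y) (v := w) (a := z) (b := w')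
    (by grind [dist_comm]) (by grind [dist_comm]) (by grind [dist_comm])
  grind [dist_comm]

end SimpleGraph.IsTree

def Graph'.toSimpleGraph (T : Graph') : SimpleGraph T.V where
  Adj a b := a ≠ b ∧ T.E a b
  symm := ⟨fun _ _ h => ⟨h.1.symm, T.symm h.2⟩⟩
  loopless := ⟨fun _ h => h.1 rfl⟩

namespace Graph'

variable {T : Graph'}

lemma toSimpleGraph_adj_iff {a b : T.V} : T.toSimpleGraph.Adj a b ↔ a ≠ b ∧ T.E a b :=
  Iff.rfl

lemma toSimpleGraph_adj (hloop : ∀ x, ¬ T.E x x) {a b : T.V} (h : T.E a b) :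
    T.toSimpleGraph.Adj a b :=
  toSimpleGraph_adj_iff.mpr ⟨fun hab => hloop b (hab ▸ h), h⟩

def walkOfSimpleGraphWalk {a b : T.V} (p : T.toSimpleGraph.Walk a b) : Walk T a b where
  len := p.length
  toFun := p.getVert
  start_eq := p.getVert_zero
  end_eq := p.getVert_length
  adj _ hi := (toSimpleGraph_adj_iff.mp (p.adj_getVert_succ hi)).2

lemma onWalk_walkOfSimpleGraphWalk {a b y : T.V} (p : T.toSimpleGraph.Walk a b) :
    OnWalk (walkOfSimpleGraphWalk p) y ↔ y ∈ p.support := by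
  rw [SimpleGraph.Walk.mem_support_iff_exists_getVert]
  exact exists_congr fun _ => and_comm

lemma isPath_walkOfSimpleGraphWalk {a b : T.V} {p : T.toSimpleGraph.Walk a b} (hp : p.IsPath) :
    IsPath (walkOfSimpleGraphWalk p) :=
  fun _ _ hi hj => hp.getVert_injOn hi hj

lemma exists_simpleGraphWalk (hloop : ∀ x, ¬ T.E x x) {a b : T.V} (γ : Walk T a b) :
    ∃ p : T.toSimpleGraph.Walk a b, p.length = γ.len ∧ ∀ i ≤ γ.len, p.getVert i = γ.toFun i := by
  suffices h : ∀ m k, k + m = γ.len → ∃ p : T.toSimpleGraph.Walk (γ.toFun k) b,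
      p.length = m ∧ ∀ i ≤ m, p.getVert i = γ.toFun (k + i) by
    obtain ⟨p, hlen, hp⟩ := h γ.len 0 (zero_add _)
    refine ⟨p.copy γ.start_eq rfl, by simpa using hlen, fun i hi => ?_⟩
    simpa using hp i hi
  intro m
  induction m with
  | zero =>
    intro k hk
    obtain rfl : k = γ.len := by omega
    exact ⟨SimpleGraph.Walk.nil.copy rfl γ.end_eq, by simp, fun i hi => by simp [Nat.le_zero.mp hi]⟩
  | succ m ih =>
    intro k hk
    obtain ⟨p, hlen, hp⟩ := ih (k + 1) (by omega)
    refine ⟨.cons (toSimpleGraph_adj hloop (γ.adj k (by omega))) p, by simp [hlen], ?_⟩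
    rintro (_ | i) hi
    · simp
    · rw [SimpleGraph.Walk.getVert_cons_succ, hp i (by omega), add_right_comm, add_assoc]

lemma dist_eq_toSimpleGraph_dist (hloop : ∀ x, ¬ T.E x x) (a b : T.V) :
    T.dist a b = T.toSimpleGraph.dist a b := by
  rw [SimpleGraph.dist_eq_sInf, Graph'.dist]
  congr 1
  ext m
  constructor
  · rintro ⟨γ, rfl⟩
    obtain ⟨p, hlen, -⟩ := exists_simpleGraphWalk hloop γ
    exact ⟨p, hlen⟩
  · rintro ⟨p, rfl⟩
    exact ⟨walkOfSimpleGraphWalk p, rfl⟩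

lemma forall_isPath_onWalk_iff (hloop : ∀ x, ¬ T.E x x) {a b y : T.V} :
    (∀ γ : Walk T a b, IsPath γ → OnWalk γ y) ↔
      ∀ p : T.toSimpleGraph.Walk a b, p.IsPath → y ∈ p.support := by
  constructor
  · intro h p hp
    exact (onWalk_walkOfSimpleGraphWalk p).mp (h _ (isPath_walkOfSimpleGraphWalk hp))
  · intro h γ hγ
    obtain ⟨p, hlen, hp⟩ := exists_simpleGraphWalk hloop γ
    have hpath : p.IsPath := by
      rw [← SimpleGraph.Walk.IsPath.getVert_injOn_iff]
      intro i hi j hj hij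
      rw [Set.mem_ofPred_eq, hlen] at hi hj
      rw [hp i hi, hp j hj] at hij
      exact hγ i j hi hj hij
    obtain ⟨i, hiy, hi⟩ := SimpleGraph.Walk.mem_support_iff_exists_getVert.mp (h p hpath)
    exact ⟨i, hlen ▸ hi, (hp i (hlen ▸ hi)).symm.trans hiy⟩

end Graph'

lemma IsTree.isTree_toSimpleGraph {T : Graph'} [Nonempty T.V] (hT : IsTree T) :
    T.toSimpleGraph.IsTree where
  preconnected a b := by
    obtain ⟨p, -, -⟩ := Graph'.exists_simpleGraphWalk hT.1 (hT.2.1 a b).some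
    exact p.reachable
  isAcyclic _ c hc :=
    hT.2.2 _ (Graph'.walkOfSimpleGraphWalk c) ⟨hc.three_le_length, fun i j hi hj =>
      hc.getVert_injOn' (by simp only [Set.mem_ofPred_eq]; exact Nat.le_sub_one_of_lt hi)
        (by simp only [Set.mem_ofPred_eq]; exact Nat.le_sub_one_of_lt hj)⟩

section DirEdge

variable {G T : Graph'} {f : G.V → T.V} {n : ℕ} {η η' : MultiHom G T}

lemma DirEdge.mono (hle : MultiHom.le η η') {x x' : G.V} (h : DirEdge f n η x x') :
    DirEdge f n η' x x' := by
  obtain ⟨hxx', y, hy, y', hy', hxy, hx'y', hpath⟩ := h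
  exact ⟨hxx', y, hle x hy, y', hle x' hy', hxy, hx'y', hpath⟩

lemma dirEdge_iff_of_isTree (hT : IsTree T) {x x' : G.V} :
    DirEdge f n η x x' ↔ G.E x x' ∧ ∃ y ∈ η.toFun x, ∃ y' ∈ η.toFun x',
      T.dist (f x) y = 2 * n ∧ T.dist (f x') y' = 2 * n ∧ T.dist (f x') y + 1 = 2 * n := by
  have : Nonempty T.V := ⟨f x⟩
  have hS := hT.isTree_toSimpleGraph
  simp only [DirEdge, Graph'.forall_isPath_onWalk_iff hT.1, Graph'.dist_eq_toSimpleGraph_dist hT.1]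
  refine and_congr_right fun hxx' => exists_congr fun y => and_congr_right fun hy =>
    exists_congr fun y' => and_congr_right fun hy' =>
      and_congr_right fun _ => and_congr_right fun hx'y' => ?_
  have hyy' : T.toSimpleGraph.dist y y' = 1 :=
    SimpleGraph.dist_eq_one_iff_adj.mpr (Graph'.toSimpleGraph_adj hT.1 (η.edge hxx' y hy y' hy'))
  constructor
  · intro h
    obtain ⟨p, hp, -⟩ := hS.connected.exists_path_of_dist (f x') y'
    have := (hS.mem_support_iff_dist_add_dist_eq hp).mp (h p hp)
    omega
  · intro h p hp
    exact (hS.mem_support_iff_dist_add_dist_eq hp).mpr (by omega)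

lemma MultiHom.mem_of_le_of_dist_eq (hT : IsTree T) (hf : IsGraphHom G T f)
    (hle : MultiHom.le η η') {x x' : G.V} {y z : T.V}
    (hbound : ∀ a ∈ η.toFun x, T.dist (f x) a ≤ 2 * n)
    (hxx' : G.E x x') (hy : y ∈ η'.toFun x) (hz : z ∈ η'.toFun x')
    (hxy : T.dist (f x) y = 2 * n) (hx'y : T.dist (f x') y + 1 = 2 * n)
    (hx'z : T.dist (f x') z = 2 * n) : y ∈ η.toFun x := by
  have : Nonempty T.V := ⟨f x⟩
  have hS := hT.isTree_toSimpleGraph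
  simp only [Graph'.dist_eq_toSimpleGraph_dist hT.1] at hbound hxy hx'y hx'z
  have hyz := Graph'.toSimpleGraph_adj hT.1 (η'.edge hxx' y hy z hz)
  have hxz : T.toSimpleGraph.dist (f x) z = 2 * n + 1 := by
    rw [hS.dist_eq_dist_add_one_of_adj_of_dist_lt (Graph'.toSimpleGraph_adj hT.1 (hf hxx')) hyz
      (by omega) ?_, hxy]
    rintro rfl
    rw [SimpleGraph.dist_self] at hx'y
    omega
  obtain ⟨a, ha⟩ := η.nonempty x
  have haz := Graph'.toSimpleGraph_adj hT.1 (η'.edge hxx' a (hle x ha) z hz)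
  have hxa := hbound a ha
  obtain rfl := hS.eq_of_adj_of_dist_lt (u := f x) haz hyz (by omega) (by omega)
  exact ha

end DirEdge

theorem statement_8_general (G T : Graph') (hT : IsTree T)
    (f : G.V → T.V) (hf : IsGraphHom G T f) (n : ℕ)
    (η η' : MultiHom G T) (hle : MultiHom.le η η')
    (hbound : ∀ z : G.V, ∀ y ∈ η.toFun z, T.dist (f z) y ≤ 2 * n) :
    (∀ x x' : G.V, DirEdge f n η x x' → DirEdge f n η' x x') ∧
    (∀ x x' x'' : G.V, DirEdge f n η' x x' → DirEdge f n η' x' x'' →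
      DirEdge f n η x x') := by
  refine ⟨fun x x' => DirEdge.mono hle, fun x x' x'' hxx' hx'x'' => ?_⟩
  rw [dirEdge_iff_of_isTree hT] at hxx' hx'x'' ⊢
  obtain ⟨hE, y, hy, -, -, hxy, -, hx'y⟩ := hxx'
  obtain ⟨hE', z, hz, z', hz', hx'z, hx''z', hx''z⟩ := hx'x''
  have hyη := MultiHom.mem_of_le_of_dist_eq hT hf hle (hbound x) hE hy hz hxy hx'y hx'z
  have hzη := MultiHom.mem_of_le_of_dist_eq hT hf hle (hbound x') hE' hz hz' hx'z hx''z hx''z'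
  exact ⟨hE, y, hyη, z, hzη, hxy, hx'z, hx'y⟩

theorem statement_8 (G T : Graph') (hT : IsTree T)
    (f : G.V → T.V) (hf : IsGraphHom G T f) (n : ℕ) (hn : 1 ≤ n)
    (η η' : MultiHom G T) (hle : MultiHom.le η η')
    (hbound : ∀ z : G.V, ∀ y ∈ η.toFun z, T.dist (f z) y ≤ 2 * n)
    (hbound' : ∀ z : G.V, ∀ y ∈ η'.toFun z, T.dist (f z) y ≤ 2 * n) :
    (∀ x x' : G.V, DirEdge f n η x x' → DirEdge f n η' x x') ∧
    (∀ x x' x'' : G.V, DirEdge f n η' x x' → DirEdge f n η' x' x'' →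
      DirEdge f n η x x') :=
  statement_8_general G T hT f hf n η η' hle hbound
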